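/- Let γ = 1 − 2π⁻². Then I₀(α) tends to π / √(2(1−γ)) = (1−γ)^{−1} as α tends to γ^{−γ}(1−γ)^{γ−1} from the right. -/

import Mathlib

open MeasureTheory Set Real

noncomputable section

/-- `f_α(t) = α t^{2γ} − t² − 1`. -/
def fA (γ α t : ℝ) : ℝ := α * t ^ (2 * γ) - t ^ 2 - 1

/-- The derivative `f_α'(t) = 2αγ t^{2γ−1} − 2t`. -/
def fA' (γ α t : ℝ) : ℝ := 2 * α * γ * t ^ (2 * γ - 1) - 2 * t

/-- The second derivative `f_α''(t) = 2αγ(2γ−1) t^{2γ−2} − 2`. -/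
def fA'' (γ α t : ℝ) : ℝ := 2 * α * γ * (2 * γ - 1) * t ^ (2 * γ - 2) - 2

/-- `ψ_α := (f_α')² − 2 f_α f_α''`. -/
def psiA (γ α t : ℝ) : ℝ := (fA' γ α t) ^ 2 - 2 * fA γ α t * fA'' γ α t

/-- The left endpoint `ω⁻_α` of the positivity interval of `f_α`. -/
def omegaMinus (γ α : ℝ) : ℝ := sInf {t : ℝ | 0 < t ∧ 0 < fA γ α t}

/-- The right endpoint `ω⁺_α` of the positivity interval of `f_α`. -/
def omegaPlus (γ α : ℝ) : ℝ := sSup {t : ℝ | 0 < t ∧ 0 < fA γ α t}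

/-- `I₀(α) := ∫_{ω⁻_α}^{ω⁺_α} dt / √(f_α(t))`. -/
def I0 (γ α : ℝ) : ℝ :=
  ∫ t in omegaMinus γ α..omegaPlus γ α, 1 / Real.sqrt (fA γ α t)

/-!
At `α = alphaStar γ` the function `f_α` has a double zero at `tStar γ = √(γ / (1 - γ))`, where
`f_α'' = -4(1 - γ)`, and is negative elsewhere. Since `f_α` increases and then decreases, for `α`
slightly larger its positivity set is a short interval `(ω⁻_α, ω⁺_α)` around `tStar γ`, at whose
ends `f_α` vanishes and on which `f_α''` is within `2η` of `-4(1 - γ)`. Hence `f_α` lies between the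
parabolas `(2(1 - γ) ∓ η)(ω⁺_α - t)(t - ω⁻_α)`, and as `∫_a^b dt / √(c (b - t)(t - a)) = π / √c`
(an arcsine), `I₀(α)` lies between `π / √(2(1 - γ) ± η)`.
-/

open Filter Topology intervalIntegral

section SecondDerivative

variable {f f' f'' : ℝ → ℝ} {a b : ℝ}

lemma nonneg_of_hasDerivAt2_nonpos (hab : a ≤ b) (hf : ContinuousOn f (Icc a b))
    (hf' : ∀ x ∈ Ioo a b, HasDerivAt f (f' x) x) (hf'' : ∀ x ∈ Ioo a b, HasDerivAt f' (f'' x) x)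
    (hf''_nonpos : ∀ x ∈ Ioo a b, f'' x ≤ 0) (ha : 0 ≤ f a) (hb : 0 ≤ f b) :
    ∀ t ∈ Icc a b, 0 ≤ f t := by
  simp only [← interior_Icc] at hf' hf'' hf''_nonpos
  have hconc : ConcaveOn ℝ (Icc a b) f :=
    concaveOn_of_hasDerivWithinAt2_nonpos (convex_Icc a b) hf
      (fun x hx => (hf' x hx).hasDerivWithinAt) (fun x hx => (hf'' x hx).hasDerivWithinAt)
      hf''_nonpos
  intro t ht
  rw [← segment_eq_Icc hab] at ht
  exact (le_min ha hb).trans (hconc.ge_on_segment (left_mem_Icc.2 hab) (right_mem_Icc.2 hab) ht)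

lemma hasDerivAt_mul_quadratic (c t : ℝ) :
    HasDerivAt (fun t => c * ((b - t) * (t - a))) (c * (a + b - 2 * t)) t := by
  refine ((((hasDerivAt_id t).const_sub b).mul ((hasDerivAt_id t).sub_const a)).const_mul c
    ).congr_deriv ?_
  simp only [id_eq]
  ring

lemma hasDerivAt_mul_linear (c t : ℝ) : HasDerivAt (fun t => c * (a + b - 2 * t)) (-2 * c) t := by
  refine ((((hasDerivAt_id t).const_mul 2).const_sub (a + b)).const_mul c).congr_deriv ?_
  ring

lemma mem_Icc_quadratic_of_hasDerivAt2 (hab : a ≤ b) (hf : ContinuousOn f (Icc a b))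
    (hf' : ∀ x ∈ Ioo a b, HasDerivAt f (f' x) x) (hf'' : ∀ x ∈ Ioo a b, HasDerivAt f' (f'' x) x)
    (ha : f a = 0) (hb : f b = 0) {c₁ c₂ : ℝ}
    (hbound : ∀ x ∈ Ioo a b, f'' x ∈ Icc (-2 * c₂) (-2 * c₁)) :
    ∀ t ∈ Icc a b, f t ∈ Icc (c₁ * ((b - t) * (t - a))) (c₂ * ((b - t) * (t - a))) := by
  intro t ht
  constructor
  · have := nonneg_of_hasDerivAt2_nonpos (f := fun t => f t - c₁ * ((b - t) * (t - a))) hab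
      (hf.sub (by fun_prop)) (fun x hx => (hf' x hx).sub (hasDerivAt_mul_quadratic c₁ x))
      (fun x hx => (hf'' x hx).sub (hasDerivAt_mul_linear c₁ x))
      (fun x hx => by linarith [(hbound x hx).2]) (by simp [ha]) (by simp [hb]) t ht
    linarith
  · have := nonneg_of_hasDerivAt2_nonpos (f := fun t => c₂ * ((b - t) * (t - a)) - f t) hab
      ((continuous_const.mul (by fun_prop)).continuousOn.sub hf)
      (fun x hx => (hasDerivAt_mul_quadratic c₂ x).sub (hf' x hx))
      (fun x hx => (hasDerivAt_mul_linear c₂ x).sub (hf'' x hx))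
      (fun x hx => by linarith [(hbound x hx).1]) (by simp [ha]) (by simp [hb]) t ht
    linarith

end SecondDerivative

section QuadraticIntegral

variable {a b c : ℝ}

lemma hasDerivAt_arcsin_div_sqrt (hc : 0 < c) {t : ℝ} (ht : t ∈ Ioo a b) :
    HasDerivAt (fun t => arcsin ((2 * t - a - b) / (b - a)) / √c)
      (1 / √(c * ((b - t) * (t - a)))) t := by
  obtain ⟨hat, htb⟩ := ht
  have hba : 0 < b - a := by linarith
  have hu : HasDerivAt (fun t => (2 * t - a - b) / (b - a)) (2 / (b - a)) t := by
    refine (((((hasDerivAt_id t).const_mul 2).sub_const a).sub_const b).div_const (b - a)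
      ).congr_deriv ?_
    simp
  have hlo : (2 * t - a - b) / (b - a) ≠ -1 := by
    rw [ne_eq, div_eq_iff hba.ne']; linarith
  have hhi : (2 * t - a - b) / (b - a) ≠ 1 := by
    rw [ne_eq, div_eq_iff hba.ne']; linarith
  refine (((hasDerivAt_arcsin hlo hhi).comp t hu).div_const √c).congr_deriv ?_
  have hsq : 1 - ((2 * t - a - b) / (b - a)) ^ 2 = (2 / (b - a)) ^ 2 * ((b - t) * (t - a)) := by
    field_simp
    ring
  have hq : 0 < (b - t) * (t - a) := mul_pos (by linarith) (by linarith)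
  rw [hsq, sqrt_mul (by positivity), sqrt_sq (by positivity), sqrt_mul hc.le]
  field_simp

lemma continuous_arcsin_div_sqrt :
    Continuous fun t => arcsin ((2 * t - a - b) / (b - a)) / √c := by
  fun_prop

lemma intervalIntegrable_one_div_sqrt_mul_quadratic (hab : a < b) (hc : 0 < c) :
    IntervalIntegrable (fun t => 1 / √(c * ((b - t) * (t - a)))) volume a b :=
  intervalIntegrable_deriv_of_nonneg continuous_arcsin_div_sqrt.continuousOn
    (fun _ hx => hasDerivAt_arcsin_div_sqrt hc (by simpa [hab.le] using hx))
    (fun _ _ => by positivity)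

lemma integral_one_div_sqrt_mul_quadratic (hab : a < b) (hc : 0 < c) :
    ∫ t in a..b, 1 / √(c * ((b - t) * (t - a))) = π / √c := by
  have hba : b - a ≠ 0 := by linarith
  rw [integral_eq_sub_of_hasDerivAt_of_le hab.le continuous_arcsin_div_sqrt.continuousOn
    (fun _ hx => hasDerivAt_arcsin_div_sqrt hc hx)
    (intervalIntegrable_one_div_sqrt_mul_quadratic hab hc)]
  rw [show (2 * b - a - b) / (b - a) = 1 by field_simp; ring,
    show (2 * a - a - b) / (b - a) = -1 by field_simp; ring, arcsin_one, arcsin_neg_one]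
  ring

end QuadraticIntegral

section Comparison

variable {f f' f'' : ℝ → ℝ} {a b c₁ c₂ : ℝ}

lemma integral_one_div_sqrt_mem_Icc (hf : Measurable f) (hab : a < b) (hc₁ : 0 < c₁)
    (hbound : ∀ t ∈ Ioo a b, f t ∈ Icc (c₁ * ((b - t) * (t - a))) (c₂ * ((b - t) * (t - a)))) :
    ∫ t in a..b, 1 / √(f t) ∈ Icc (π / √c₂) (π / √c₁) := by
  have hq : ∀ t ∈ Ioo a b, 0 < (b - t) * (t - a) := fun t ht =>
    mul_pos (by linarith [ht.2]) (by linarith [ht.1])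
  have hc₂ : 0 < c₂ := by
    have hm : (a + b) / 2 ∈ Ioo a b := ⟨by linarith, by linarith⟩
    have := (hbound _ hm).1.trans (hbound _ hm).2
    exact hc₁.trans_le (le_of_mul_le_mul_right this (hq _ hm))
  have hle₁ : ∀ t ∈ Ioo a b, 1 / √(f t) ≤ 1 / √(c₁ * ((b - t) * (t - a))) := fun t ht =>
    one_div_le_one_div_of_le (sqrt_pos.2 (mul_pos hc₁ (hq t ht))) (sqrt_le_sqrt (hbound t ht).1)
  have hle₂ : ∀ t ∈ Ioo a b, 1 / √(c₂ * ((b - t) * (t - a))) ≤ 1 / √(f t) := fun t ht =>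
    one_div_le_one_div_of_le (sqrt_pos.2 ((mul_pos hc₁ (hq t ht)).trans_le (hbound t ht).1))
      (sqrt_le_sqrt (hbound t ht).2)
  have hint₁ := intervalIntegrable_one_div_sqrt_mul_quadratic hab hc₁
  have hint₂ := intervalIntegrable_one_div_sqrt_mul_quadratic hab hc₂
  have hint : IntervalIntegrable (fun t => 1 / √(f t)) volume a b := by
    rw [intervalIntegrable_iff_integrableOn_Ioo_of_le hab.le] at hint₁ ⊢
    refine hint₁.mono' (measurable_const.div hf.sqrt).aestronglyMeasurable ?_
    filter_upwards [ae_restrict_mem measurableSet_Ioo] with t ht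
    rw [norm_of_nonneg (by positivity)]
    exact hle₁ t ht
  rw [← integral_one_div_sqrt_mul_quadratic hab hc₁, ← integral_one_div_sqrt_mul_quadratic hab hc₂]
  exact ⟨integral_mono_on_of_le_Ioo hab.le hint₂ hint hle₂,
    integral_mono_on_of_le_Ioo hab.le hint hint₁ hle₁⟩

lemma integral_one_div_sqrt_mem_Icc_of_hasDerivAt2 (hf : Continuous f) (hab : a < b)
    (hf' : ∀ x ∈ Ioo a b, HasDerivAt f (f' x) x) (hf'' : ∀ x ∈ Ioo a b, HasDerivAt f' (f'' x) x)
    (ha : f a = 0) (hb : f b = 0) (hc₁ : 0 < c₁)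
    (hbound : ∀ x ∈ Ioo a b, f'' x ∈ Icc (-2 * c₂) (-2 * c₁)) :
    ∫ t in a..b, 1 / √(f t) ∈ Icc (π / √c₂) (π / √c₁) :=
  integral_one_div_sqrt_mem_Icc hf.measurable hab hc₁ fun t ht =>
    mem_Icc_quadratic_of_hasDerivAt2 hab.le hf.continuousOn hf' hf'' ha hb hbound t
      (Ioo_subset_Icc_self ht)

end Comparison

def posSet (f : ℝ → ℝ) : Set ℝ := {t | 0 < t ∧ 0 < f t}

section PosSet

variable {f : ℝ → ℝ}

lemma isOpen_posSet (hf : Continuous f) : IsOpen (posSet f) :=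
  (isOpen_lt continuous_const continuous_id).inter (isOpen_lt continuous_const hf)

lemma map_csInf_posSet_eq_zero (hf : Continuous f) (hne : (posSet f).Nonempty)
    (hbdd : BddBelow (posSet f)) (hpos : 0 < sInf (posSet f)) : f (sInf (posSet f)) = 0 := by
  refine le_antisymm ?_ ?_
  · by_contra! h
    have hnhds : ∀ᶠ t in 𝓝 (sInf (posSet f)), t ∈ posSet f :=
      (isOpen_posSet hf).mem_nhds ⟨hpos, h⟩
    obtain ⟨t, ht, htS⟩ := hnhds.exists_lt
    exact (csInf_le hbdd htS).not_gt ht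
  · exact closure_minimal (fun t ht => ht.2.le) (isClosed_le continuous_const hf)
      (csInf_mem_closure hne hbdd)

lemma map_csSup_posSet_eq_zero (hf : Continuous f) (hne : (posSet f).Nonempty)
    (hbdd : BddAbove (posSet f)) : f (sSup (posSet f)) = 0 := by
  obtain ⟨t₀, ht₀⟩ := hne
  have hpos : 0 < sSup (posSet f) := ht₀.1.trans_le (le_csSup hbdd ht₀)
  refine le_antisymm ?_ ?_
  · by_contra! h
    have hnhds : ∀ᶠ t in 𝓝 (sSup (posSet f)), t ∈ posSet f :=
      (isOpen_posSet hf).mem_nhds ⟨hpos, h⟩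
    obtain ⟨t, ht, htS⟩ := hnhds.exists_gt
    exact (le_csSup hbdd htS).not_gt ht
  · exact closure_minimal (fun t ht => ht.2.le) (isClosed_le continuous_const hf)
      (csSup_mem_closure ⟨t₀, ht₀⟩ hbdd)

lemma posSet_subset_Ioo (hS : (posSet f).OrdConnected) {t₀ l r : ℝ} (ht₀ : t₀ ∈ posSet f)
    (hl₀ : l ≤ t₀) (ht₀r : t₀ ≤ r) (hl : f l ≤ 0) (hr : f r ≤ 0) : posSet f ⊆ Ioo l r := by
  intro t ht
  constructor
  · by_contra! htl
    exact hl.not_gt (hS.out ht ht₀ ⟨htl, hl₀⟩).2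
  · by_contra! hrt
    exact hr.not_gt (hS.out ht₀ ht ⟨ht₀r, hrt⟩).2

lemma posSet_endpoints (hf : Continuous f) (hS : (posSet f).OrdConnected) {t₀ l r : ℝ}
    (ht₀ : t₀ ∈ posSet f) (hl0 : 0 < l) (hl₀ : l ≤ t₀) (ht₀r : t₀ ≤ r) (hl : f l ≤ 0)
    (hr : f r ≤ 0) :
    l ≤ sInf (posSet f) ∧ sInf (posSet f) < sSup (posSet f) ∧ sSup (posSet f) ≤ r ∧
      f (sInf (posSet f)) = 0 ∧ f (sSup (posSet f)) = 0 := by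
  have hsub := posSet_subset_Ioo hS ht₀ hl₀ ht₀r hl hr
  have hbdd : BddBelow (posSet f) := ⟨l, fun t ht => (hsub ht).1.le⟩
  have hbdd' : BddAbove (posSet f) := ⟨r, fun t ht => (hsub ht).2.le⟩
  have hlinf : l ≤ sInf (posSet f) := le_csInf ⟨t₀, ht₀⟩ fun t ht => (hsub ht).1.le
  have hinf := map_csInf_posSet_eq_zero hf ⟨t₀, ht₀⟩ hbdd (hl0.trans_le hlinf)
  have hsup := map_csSup_posSet_eq_zero hf ⟨t₀, ht₀⟩ hbdd'
  have hinf_lt : sInf (posSet f) < t₀ :=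
    (csInf_le hbdd ht₀).lt_of_ne fun h => (h ▸ ht₀.2).ne' hinf
  refine ⟨hlinf, hinf_lt.trans_le (le_csSup hbdd' ht₀),
    csSup_le ⟨t₀, ht₀⟩ fun t ht => (hsub ht).2.le, hinf, hsup⟩

end PosSet

section Profile

variable {γ α : ℝ}

lemma continuous_fA (hγ : 0 ≤ γ) : Continuous (fA γ α) := by
  have : Continuous fun t : ℝ => t ^ (2 * γ) := continuous_rpow_const (by linarith)
  unfold fA
  fun_prop

lemma continuous_fA_left (γ t : ℝ) : Continuous fun α => fA γ α t := by
  unfold fA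
  fun_prop

lemma hasDerivAt_fA {t : ℝ} (ht : 0 < t) : HasDerivAt (fA γ α) (fA' γ α t) t := by
  refine (((hasDerivAt_rpow_const (p := 2 * γ) (Or.inl ht.ne')).const_mul α).sub
    (hasDerivAt_pow 2 t)).sub_const 1 |>.congr_deriv ?_
  unfold fA'
  push_cast
  ring

lemma hasDerivAt_fA' {t : ℝ} (ht : 0 < t) : HasDerivAt (fA' γ α) (fA'' γ α t) t := by
  refine (((hasDerivAt_rpow_const (p := 2 * γ - 1) (Or.inl ht.ne')).const_mul
    (2 * α * γ)).sub ((hasDerivAt_id t).const_mul 2)).congr_deriv ?_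
  unfold fA''
  rw [show 2 * γ - 1 - 1 = 2 * γ - 2 by ring]
  ring

lemma continuousAt_fA''_uncurry {t : ℝ} (ht : t ≠ 0) :
    ContinuousAt (fun p : ℝ × ℝ => fA'' γ p.1 p.2) (α, t) := by
  unfold fA''
  fun_prop (disch := simp [ht])

lemma fA'_eq {t : ℝ} (ht : 0 < t) : fA' γ α t = 2 * t * (α * γ * t ^ (2 * γ - 2) - 1) := by
  rw [fA', show 2 * γ - 1 = 2 * γ - 2 + 1 by ring, rpow_add_one ht.ne']
  ring

lemma fA_strictMonoOn (hγ0 : 0 < γ) (hγ1 : γ < 1) (hα : 0 < α) {tc : ℝ}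
    (hc : α * γ * tc ^ (2 * γ - 2) = 1) : StrictMonoOn (fA γ α) (Icc 0 tc) := by
  refine strictMonoOn_of_deriv_pos (convex_Icc 0 tc) (continuous_fA hγ0.le).continuousOn ?_
  rw [interior_Icc]
  rintro x ⟨hx0, hxc⟩
  have hpow : tc ^ (2 * γ - 2) < x ^ (2 * γ - 2) := rpow_lt_rpow_of_neg hx0 hxc (by linarith)
  have : 1 < α * γ * x ^ (2 * γ - 2) := hc ▸ mul_lt_mul_of_pos_left hpow (by positivity)
  rw [(hasDerivAt_fA hx0).deriv, fA'_eq hx0]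
  nlinarith

lemma fA_strictAntiOn (hγ0 : 0 < γ) (hγ1 : γ < 1) (hα : 0 < α) {tc : ℝ} (htc : 0 < tc)
    (hc : α * γ * tc ^ (2 * γ - 2) = 1) : StrictAntiOn (fA γ α) (Ici tc) := by
  refine strictAntiOn_of_deriv_neg (convex_Ici tc) (continuous_fA hγ0.le).continuousOn ?_
  rw [interior_Ici]
  intro x (hcx : tc < x)
  have hx0 := htc.trans hcx
  have hpow : x ^ (2 * γ - 2) < tc ^ (2 * γ - 2) := rpow_lt_rpow_of_neg htc hcx (by linarith)
  have : α * γ * x ^ (2 * γ - 2) < 1 := hc ▸ mul_lt_mul_of_pos_left hpow (by positivity)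
  rw [(hasDerivAt_fA hx0).deriv, fA'_eq hx0]
  nlinarith

lemma ordConnected_posSet_fA (hγ0 : 0 < γ) (hγ1 : γ < 1) (hα : 0 < α) :
    (posSet (fA γ α)).OrdConnected := by
  set tc := (α * γ) ^ (2 - 2 * γ)⁻¹
  have htc : 0 < tc := by positivity
  have hc : α * γ * tc ^ (2 * γ - 2) = 1 := by
    rw [← rpow_mul (by positivity), show 2 * γ - 2 = -(2 - 2 * γ) by ring, mul_neg,
      inv_mul_cancel₀ (by linarith), rpow_neg_one, mul_inv_cancel₀ (by positivity)]
  refine ⟨fun x hx z hz y hy => ⟨hx.1.trans_le hy.1, ?_⟩⟩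
  rcases le_total y tc with hyc | hcy
  · exact hx.2.trans_le <| (fA_strictMonoOn hγ0 hγ1 hα hc).monotoneOn
      ⟨hx.1.le, hy.1.trans hyc⟩ ⟨hx.1.le.trans hy.1, hyc⟩ hy.1
  · exact hz.2.trans_le <| (fA_strictAntiOn hγ0 hγ1 hα htc hc).antitoneOn
      hcy (hcy.trans hy.2) hy.2

end Profile

def alphaStar (γ : ℝ) : ℝ := γ ^ (-γ) * (1 - γ) ^ (γ - 1)

def tStar (γ : ℝ) : ℝ := √(γ / (1 - γ))

section DoubleZero

variable {γ : ℝ}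

lemma alphaStar_pos (hγ0 : 0 < γ) (hγ1 : γ < 1) : 0 < alphaStar γ := by
  have : 0 < 1 - γ := by linarith
  unfold alphaStar
  positivity

lemma tStar_pos (hγ0 : 0 < γ) (hγ1 : γ < 1) : 0 < tStar γ := by
  have : 0 < 1 - γ := by linarith
  unfold tStar
  positivity

lemma tStar_sq (hγ0 : 0 < γ) (hγ1 : γ < 1) : tStar γ ^ 2 = γ / (1 - γ) :=
  sq_sqrt (div_nonneg hγ0.le (by linarith))

lemma alphaStar_mul_tStar_rpow (hγ0 : 0 < γ) (hγ1 : γ < 1) :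
    alphaStar γ * tStar γ ^ (2 * γ) = (1 - γ)⁻¹ := by
  have h1γ : 0 < 1 - γ := by linarith
  rw [alphaStar, tStar, sqrt_eq_rpow, ← rpow_mul (div_nonneg hγ0.le h1γ.le),
    show 1 / 2 * (2 * γ) = γ by ring, div_rpow hγ0.le h1γ.le, rpow_neg hγ0.le,
    rpow_sub_one h1γ.ne']
  have : 0 < γ ^ γ := by positivity
  have : 0 < (1 - γ) ^ γ := by positivity
  field_simp

lemma alphaStar_mul_mul_tStar_rpow (hγ0 : 0 < γ) (hγ1 : γ < 1) :
    alphaStar γ * γ * tStar γ ^ (2 * γ - 2) = 1 := by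
  have h1γ : 0 < 1 - γ := by linarith
  rw [rpow_sub (tStar_pos hγ0 hγ1), rpow_two, tStar_sq hγ0 hγ1, mul_right_comm, mul_div_assoc',
    alphaStar_mul_tStar_rpow hγ0 hγ1]
  field_simp

lemma fA_alphaStar_tStar (hγ0 : 0 < γ) (hγ1 : γ < 1) : fA γ (alphaStar γ) (tStar γ) = 0 := by
  have h1γ : 1 - γ ≠ 0 := by linarith
  rw [fA, alphaStar_mul_tStar_rpow hγ0 hγ1, tStar_sq hγ0 hγ1]
  field_simp
  ring

lemma fA''_alphaStar_tStar (hγ0 : 0 < γ) (hγ1 : γ < 1) :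
    fA'' γ (alphaStar γ) (tStar γ) = -4 * (1 - γ) := by
  rw [fA'', show 2 * alphaStar γ * γ * (2 * γ - 1) * tStar γ ^ (2 * γ - 2) =
    2 * (2 * γ - 1) * (alphaStar γ * γ * tStar γ ^ (2 * γ - 2)) by ring,
    alphaStar_mul_mul_tStar_rpow hγ0 hγ1]
  ring

lemma fA_alphaStar_neg (hγ0 : 0 < γ) (hγ1 : γ < 1) {t : ℝ} (ht : 0 ≤ t) (hne : t ≠ tStar γ) :
    fA γ (alphaStar γ) t < 0 := by
  have hc := alphaStar_mul_mul_tStar_rpow hγ0 hγ1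
  rw [← fA_alphaStar_tStar hγ0 hγ1]
  rcases hne.lt_or_gt with hlt | hgt
  · exact fA_strictMonoOn hγ0 hγ1 (alphaStar_pos hγ0 hγ1) hc ⟨ht, hlt.le⟩
      ⟨ht.trans hlt.le, le_rfl⟩ hlt
  · exact fA_strictAntiOn hγ0 hγ1 (alphaStar_pos hγ0 hγ1) (tStar_pos hγ0 hγ1) hc
      self_mem_Ici hgt.le hgt

lemma tStar_mem_posSet (hγ0 : 0 < γ) (hγ1 : γ < 1) {α : ℝ} (hα : alphaStar γ < α) :
    tStar γ ∈ posSet (fA γ α) := by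
  have ht := tStar_pos hγ0 hγ1
  have hfA : fA γ α (tStar γ) = fA γ (alphaStar γ) (tStar γ) +
      (α - alphaStar γ) * tStar γ ^ (2 * γ) := by
    unfold fA
    ring
  refine ⟨ht, ?_⟩
  rw [hfA, fA_alphaStar_tStar hγ0 hγ1, zero_add]
  exact mul_pos (by linarith) (by positivity)

end DoubleZero

lemma I0_mem_Icc {γ α δ c₁ c₂ : ℝ} (hγ0 : 0 < γ) (hγ1 : γ < 1) (hα : alphaStar γ < α)
    (hδ0 : 0 < δ) (hδ : δ < tStar γ) (hl : fA γ α (tStar γ - δ) < 0) (hr : fA γ α (tStar γ + δ) < 0)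
    (hc₁ : 0 < c₁) (hbound : ∀ x ∈ Icc (tStar γ - δ) (tStar γ + δ),
      fA'' γ α x ∈ Icc (-2 * c₂) (-2 * c₁)) :
    I0 γ α ∈ Icc (π / √c₂) (π / √c₁) := by
  show ∫ t in sInf (posSet (fA γ α))..sSup (posSet (fA γ α)), 1 / √(fA γ α t) ∈ _
  have ht₀ := tStar_mem_posSet hγ0 hγ1 hα
  obtain ⟨hla, hab, hbr, hfa, hfb⟩ := posSet_endpoints (continuous_fA hγ0.le)
    (ordConnected_posSet_fA hγ0 hγ1 ((alphaStar_pos hγ0 hγ1).trans hα)) ht₀ (by linarith)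
    (by linarith [ht₀.1]) (by linarith [ht₀.1]) hl.le hr.le
  have hpos : ∀ x ∈ Ioo (sInf (posSet (fA γ α))) (sSup (posSet (fA γ α))), 0 < x :=
    fun x hx => by linarith [hx.1]
  exact integral_one_div_sqrt_mem_Icc_of_hasDerivAt2 (continuous_fA hγ0.le) hab
    (fun x hx => hasDerivAt_fA (hpos x hx)) (fun x hx => hasDerivAt_fA' (hpos x hx)) hfa hfb
    hc₁ fun x hx => hbound x ⟨by linarith [hx.1], by linarith [hx.2]⟩

lemma eventually_fA_tStar_add_neg {γ s : ℝ} (hγ0 : 0 < γ) (hγ1 : γ < 1) (hs : s ≠ 0)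
    (hst : 0 ≤ tStar γ + s) : ∀ᶠ α in 𝓝 (alphaStar γ), fA γ α (tStar γ + s) < 0 :=
  (continuous_fA_left γ _).continuousAt.eventually_lt continuousAt_const
    (fA_alphaStar_neg hγ0 hγ1 hst (by simpa using hs))

lemma eventually_I0_mem_Icc {γ η : ℝ} (hγ0 : 0 < γ) (hγ1 : γ < 1) (hη : 0 < η)
    (hηγ : η < 2 * (1 - γ)) : ∀ᶠ α in 𝓝[>] alphaStar γ,
      I0 γ α ∈ Icc (π / √(2 * (1 - γ) + η)) (π / √(2 * (1 - γ) - η)) := by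
  have ht₀ := tStar_pos hγ0 hγ1
  have h'' : ∀ᶠ p in 𝓝 (alphaStar γ, tStar γ),
      fA'' γ p.1 p.2 ∈ Icc (-2 * (2 * (1 - γ) + η)) (-2 * (2 * (1 - γ) - η)) := by
    refine (continuousAt_fA''_uncurry ht₀.ne').eventually (Icc_mem_nhds ?_ ?_) <;>
      simp only [fA''_alphaStar_tStar hγ0 hγ1] <;> linarith
  obtain ⟨ε, hε, hball⟩ := Metric.eventually_nhds_iff.1 h''
  set δ := min (ε / 2) (tStar γ / 2)
  have hδ : 0 < δ := by positivity
  have hδε : δ < ε := (min_le_left _ _).trans_lt (by linarith)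
  have hδt : δ < tStar γ := (min_le_right _ _).trans_lt (by linarith)
  have hl := eventually_fA_tStar_add_neg hγ0 hγ1 (neg_ne_zero.2 hδ.ne') (by linarith)
  have hr := eventually_fA_tStar_add_neg hγ0 hγ1 hδ.ne' (by linarith)
  filter_upwards [eventually_mem_nhdsWithin, nhdsWithin_le_nhds (Metric.ball_mem_nhds _ hε),
    nhdsWithin_le_nhds hl, nhdsWithin_le_nhds hr] with α hα hαε hl hr
  refine I0_mem_Icc hγ0 hγ1 hα hδ hδt hl hr (by linarith) fun x hx => hball (y := (α, x)) ?_
  rw [Prod.dist_eq, max_lt_iff]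
  exact ⟨hαε, abs_lt.2 ⟨by linarith [hx.1], by linarith [hx.2]⟩⟩

lemma tendsto_of_eventually_mem_Icc {ι : Type*} {l : Filter ι} {p : Filter ℝ} [p.NeBot]
    {F : ι → ℝ} {lo hi : ℝ → ℝ} {L : ℝ} (hlo : Tendsto lo p (𝓝 L)) (hhi : Tendsto hi p (𝓝 L))
    (h : ∀ᶠ η in p, ∀ᶠ x in l, F x ∈ Icc (lo η) (hi η)) : Tendsto F l (𝓝 L) := by
  refine tendsto_order.2 ⟨fun L' hL' => ?_, fun L' hL' => ?_⟩
  · obtain ⟨η, hη, hL'η⟩ := (h.and (hlo.eventually (lt_mem_nhds hL'))).exists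
    exact hη.mono fun x hx => hL'η.trans_le hx.1
  · obtain ⟨η, hη, hL'η⟩ := (h.and (hhi.eventually (gt_mem_nhds hL'))).exists
    exact hη.mono fun x hx => hx.2.trans_lt hL'η

lemma tendsto_I0_alphaStar {γ : ℝ} (hγ0 : 0 < γ) (hγ1 : γ < 1) :
    Tendsto (I0 γ) (𝓝[>] alphaStar γ) (𝓝 (π / √(2 * (1 - γ)))) := by
  have hu : 0 < 2 * (1 - γ) := by linarith
  have hlim : ∀ s : ℝ, Tendsto (fun η => π / √(2 * (1 - γ) + s * η)) (𝓝[>] 0)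
      (𝓝 (π / √(2 * (1 - γ)))) := fun s => by
    refine tendsto_nhdsWithin_of_tendsto_nhds ?_
    have : ContinuousAt (fun η => π / √(2 * (1 - γ) + s * η)) 0 :=
      continuousAt_const.div (by fun_prop) (by rw [mul_zero, add_zero]; exact (sqrt_pos.2 hu).ne')
    simpa using this.tendsto
  refine tendsto_of_eventually_mem_Icc (hlim 1) (hlim (-1)) ?_
  filter_upwards [Ioo_mem_nhdsGT hu] with η hη
  simpa [← sub_eq_add_neg] using eventually_I0_mem_Icc hγ0 hγ1 hη.1 hη.2

/-- For `γ = 1 − 2π⁻²`, `I₀(α)` tends to `π/√(2(1−γ)) = (1−γ)⁻¹` as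
`α → γ^{−γ}(1−γ)^{γ−1}` from the right. -/
theorem I0_tendsto (γ : ℝ) (hγ : γ = 1 - 2 / π ^ 2) :
    Filter.Tendsto (I0 γ)
        (nhdsWithin (γ ^ (-γ) * (1 - γ) ^ (γ - 1))
          (Ioi (γ ^ (-γ) * (1 - γ) ^ (γ - 1))))
        (nhds (π / Real.sqrt (2 * (1 - γ)))) ∧
      π / Real.sqrt (2 * (1 - γ)) = (1 - γ)⁻¹ := by
  have h1γ : 1 - γ = 2 / π ^ 2 := by rw [hγ]; ring
  have hπ : 2 / π ^ 2 < 1 := by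
    rw [div_lt_one (by positivity)]
    nlinarith [pi_gt_three]
  have hπ0 : 0 < 2 / π ^ 2 := by positivity
  refine ⟨tendsto_I0_alphaStar (by linarith) (by linarith), ?_⟩
  rw [h1γ, show 2 * (2 / π ^ 2) = (2 / π) ^ 2 by ring, sqrt_sq (by positivity)]
  field_simp
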